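/- Let Q ∈ ℝⁿˣⁿ be symmetric with exactly one negative eigenvalue, and let Q = PᵀDP with P orthogonal (rows the normalized eigenvectors) and D = diag(σ₁, …, σₙ) where σ_i ≥ 0 for i = 1, …, n−1 and σₙ < 0. Let C ⊆ ℝⁿ be a polyhedral cone. Then the homogeneous quadratic program minimize ½vᵀQv subject to v ∈ C is unbounded below if and only if at least one of the following two convex quadratic programs is feasible and has a negative optimal objective value: minimize ½∑_{i=1}^{n−1} σ_i y_i² − ½|σₙ| over (y, v̂) subject to v̂ ∈ C, y = P v̂ and yₙ = 1 (respectively yₙ = −1). -/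

import Mathlib

/-!
The cone `C` is invariant under `v ↦ t • v` for `t ≥ 0`, which scales `vᵀQv` by `t²`, so the
QP is unbounded below iff `C` contains some `v` with `vᵀQv < 0`. Writing `y = P v`, the form is
`∑ σᵢ yᵢ²`, nonnegative where `y_last = 0`; hence such a `v` can be rescaled to `y_last = ±1`,
and on that slice `½ vᵀQv` is the auxiliary objective. Up to a constant, that objective is the
squared norm of a linear image of the feasible polyhedron; linear images of polyhedra are
polyhedra (Fourier–Motzkin), hence closed, so its minimum is attained.
-/

open Filter Topology Set

noncomputable section

/-- The objective of the auxiliary convex programs: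
`½ ∑_{i ≠ last} σᵢ yᵢ² − ½ |σ_last|`. -/
def auxObj {n : ℕ} (σ : Fin (n + 1) → ℝ) (y : Fin (n + 1) → ℝ) : ℝ :=
  (1/2) * (∑ i ∈ Finset.univ.erase (Fin.last n), σ i * y i ^ 2)
    - (1/2) * |σ (Fin.last n)|

theorem exists_between_of_finite {α ι κ : Type*} [LinearOrder α] [Nonempty α]
    [Finite ι] [Finite κ] (l : ι → α) (u : κ → α) (h : ∀ i j, l i ≤ u j) :
    ∃ t, (∀ i, l i ≤ t) ∧ ∀ j, t ≤ u j := by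
  rcases isEmpty_or_nonempty ι with hι | hι
  · rcases isEmpty_or_nonempty κ with hκ | hκ
    · exact ⟨Classical.arbitrary α, isEmptyElim, isEmptyElim⟩
    · obtain ⟨j, hj⟩ := Finite.exists_min u
      exact ⟨u j, isEmptyElim, hj⟩
  · obtain ⟨i, hi⟩ := Finite.exists_max l
    exact ⟨l i, hi, h i⟩

section Polyhedron

variable {E F : Type*} [AddCommGroup E] [Module ℝ E] [AddCommGroup F] [Module ℝ F]

def IsPolyhedron (S : Set E) : Prop :=
  ∃ (ι : Type) (_ : Finite ι) (f : ι → E →ₗ[ℝ] ℝ) (b : ι → ℝ), S = {x | ∀ i, f i x ≤ b i}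

theorem isPolyhedron_setOf_forall_eq {ι : Type} [Finite ι] (f : ι → E →ₗ[ℝ] ℝ) (b : ι → ℝ) :
    IsPolyhedron {x | ∀ i, f i x = b i} := by
  refine ⟨ι ⊕ ι, inferInstance, Sum.elim f (-f), Sum.elim b (-b), ?_⟩
  ext x
  simp only [mem_ofPred_eq, Sum.forall, Sum.elim_inl, Sum.elim_inr, Pi.neg_apply,
    LinearMap.neg_apply, neg_le_neg_iff, ← forall_and, le_antisymm_iff]

theorem isPolyhedron_setOf_eq (f : E →ₗ[ℝ] ℝ) (b : ℝ) : IsPolyhedron {x | f x = b} := by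
  simpa using isPolyhedron_setOf_forall_eq (fun _ : Unit => f) fun _ => b

theorem isPolyhedron_singleton_zero [FiniteDimensional ℝ E] : IsPolyhedron ({0} : Set E) := by
  convert isPolyhedron_setOf_forall_eq (Module.finBasis ℝ E).coord 0
  simp only [Pi.zero_apply, Module.Basis.forall_coord_eq_zero_iff, ofPred_eq_eq_singleton]

theorem IsPolyhedron.inter {S T : Set E} (hS : IsPolyhedron S) (hT : IsPolyhedron T) :
    IsPolyhedron (S ∩ T) := by
  obtain ⟨ι, _, f, b, rfl⟩ := hS
  obtain ⟨κ, _, g, c, rfl⟩ := hT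
  refine ⟨ι ⊕ κ, inferInstance, Sum.elim f g, Sum.elim b c, ?_⟩
  ext x
  simp only [mem_inter_iff, mem_ofPred_eq, Sum.forall, Sum.elim_inl, Sum.elim_inr]

theorem IsPolyhedron.preimage {S : Set F} (hS : IsPolyhedron S) (L : E →ₗ[ℝ] F) :
    IsPolyhedron (L ⁻¹' S) := by
  obtain ⟨ι, _, f, b, rfl⟩ := hS
  exact ⟨ι, inferInstance, fun i => (f i).comp L, b, rfl⟩

theorem IsPolyhedron.image_linearEquiv {S : Set E} (hS : IsPolyhedron S) (e : E ≃ₗ[ℝ] F) :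
    IsPolyhedron (e '' S) := by
  rw [e.image_eq_preimage_symm]
  exact hS.preimage e.symm.toLinearMap

/-- Fourier–Motzkin elimination. -/
theorem IsPolyhedron.image_snd {S : Set (ℝ × E)} (hS : IsPolyhedron S) :
    IsPolyhedron (Prod.snd '' S) := by
  obtain ⟨ι, _, f, b, rfl⟩ := hS
  set a : ι → ℝ := fun i => f i (1, 0)
  set h : ι → E →ₗ[ℝ] ℝ := fun i => (f i).comp (LinearMap.inr ℝ ℝ E)
  have hf : ∀ i t x, f i (t, x) = a i * t + h i x := fun i t x => by
    rw [show ((t, x) : ℝ × E) = t • (1, 0) + (0, x) by simp, map_add, map_smul, smul_eq_mul,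
      mul_comm]
    rfl
  -- constraints with `a i = 0` survive; a lower bound `q` and an upper bound `r` on the
  -- eliminated coordinate combine into the constraint "lower bound ≤ upper bound"
  refine ⟨{i // a i = 0} ⊕ {q // a q < 0} × {r // 0 < a r}, inferInstance,
    Sum.elim (fun i => h i) fun qr => (a qr.2)⁻¹ • h qr.2 - (a qr.1)⁻¹ • h qr.1,
    Sum.elim (fun i => b i) fun qr => (a qr.2)⁻¹ * b qr.2 - (a qr.1)⁻¹ * b qr.1, ?_⟩
  ext x
  simp only [mem_image, mem_ofPred_eq, Prod.exists, exists_eq_right, Sum.forall, Prod.forall,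
    Subtype.forall, Sum.elim_inl, Sum.elim_inr, hf, LinearMap.sub_apply, LinearMap.smul_apply,
    smul_eq_mul]
  have lower : ∀ q, a q < 0 → ∀ t, a q * t + h q x ≤ b q ↔ (b q - h q x) / a q ≤ t :=
    fun q hq t => by rw [div_le_iff_of_neg hq]; constructor <;> intro <;> linarith
  have upper : ∀ r, 0 < a r → ∀ t, a r * t + h r x ≤ b r ↔ t ≤ (b r - h r x) / a r :=
    fun r hr t => by rw [le_div_iff₀ hr]; constructor <;> intro <;> linarith
  have pair : ∀ q r, (a r)⁻¹ * h r x - (a q)⁻¹ * h q x ≤ (a r)⁻¹ * b r - (a q)⁻¹ * b q ↔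
      (b q - h q x) / a q ≤ (b r - h r x) / a r := fun q r => by
    rw [div_eq_inv_mul, div_eq_inv_mul, mul_sub, mul_sub]
    constructor <;> intro <;> linarith
  constructor
  · rintro ⟨t, ht⟩
    refine ⟨fun i hi => by simpa [hi] using ht i, fun q hq r hr => (pair q r).2 ?_⟩
    exact ((lower q hq t).1 (ht q)).trans ((upper r hr t).1 (ht r))
  · rintro ⟨hzero, hpair⟩
    obtain ⟨t, hlo, hup⟩ := exists_between_of_finite
      (fun q : {q // a q < 0} => (b q - h q x) / a q)
      (fun r : {r // 0 < a r} => (b r - h r x) / a r)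
      fun q r => (pair q r).1 (hpair q q.2 r r.2)
    refine ⟨t, fun i => ?_⟩
    rcases lt_trichotomy (a i) 0 with hi | hi | hi
    · exact (lower i hi t).2 (hlo ⟨i, hi⟩)
    · simpa [hi] using hzero i hi
    · exact (upper i hi t).2 (hup ⟨i, hi⟩)

theorem IsPolyhedron.image_snd_pi {m : ℕ} {S : Set ((Fin m → ℝ) × F)} (hS : IsPolyhedron S) :
    IsPolyhedron (Prod.snd '' S) := by
  induction m generalizing F with
  | zero =>
    have : Prod.snd '' S = (LinearMap.prod 0 LinearMap.id : F →ₗ[ℝ] (Fin 0 → ℝ) × F) ⁻¹' S := by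
      ext y
      refine ⟨?_, fun hy => ⟨_, hy, rfl⟩⟩
      rintro ⟨⟨v, y⟩, hv, rfl⟩
      simpa [Subsingleton.elim v 0] using hv
    rw [this]
    exact hS.preimage _
  | succ m ih =>
    let e := ((Fin.consLinearEquiv ℝ fun _ : Fin (m + 1) => ℝ).symm.prodCongr
      (LinearEquiv.refl ℝ F)).trans (LinearEquiv.prodAssoc ℝ ℝ (Fin m → ℝ) F)
    have : Prod.snd '' S = Prod.snd '' (Prod.snd '' (e '' S)) := by
      simp only [image_image]
      rfl
    rw [this]
    exact ih (hS.image_linearEquiv e).image_snd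

theorem IsPolyhedron.image [FiniteDimensional ℝ E] [FiniteDimensional ℝ F] {S : Set E}
    (hS : IsPolyhedron S) (L : E →ₗ[ℝ] F) : IsPolyhedron (L '' S) := by
  let e := (Module.finBasis ℝ E).equivFun
  let φ := e.symm.toLinearMap ∘ₗ LinearMap.fst ℝ _ F
  let ψ := L ∘ₗ φ - LinearMap.snd ℝ (Fin (Module.finrank ℝ E) → ℝ) F
  have : L '' S = Prod.snd '' (φ ⁻¹' S ∩ ψ ⁻¹' {0}) := by
    ext y
    simp only [mem_image, mem_inter_iff, mem_preimage, ψ, LinearMap.sub_apply, LinearMap.comp_apply,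
      mem_singleton_iff, sub_eq_zero, Prod.exists, exists_eq_right]
    constructor
    · rintro ⟨x, hx, rfl⟩
      exact ⟨e x, by simpa [φ] using hx⟩
    · rintro ⟨v, hv, hy⟩
      exact ⟨_, hv, hy⟩
  rw [this]
  exact ((hS.preimage φ).inter ((isPolyhedron_singleton_zero (E := F)).preimage _)).image_snd_pi

end Polyhedron

section Normed

variable {E F : Type*} [AddCommGroup E] [Module ℝ E] [FiniteDimensional ℝ E]
  [NormedAddCommGroup F] [NormedSpace ℝ F] [FiniteDimensional ℝ F]

theorem IsPolyhedron.isClosed {S : Set F} (hS : IsPolyhedron S) : IsClosed S := by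
  obtain ⟨ι, _, f, b, rfl⟩ := hS
  rw [ofPred_forall]
  exact isClosed_iInter fun i => isClosed_le (f i).continuous_of_finiteDimensional continuous_const

theorem IsPolyhedron.exists_forall_norm_le {S : Set E} (hS : IsPolyhedron S) (hne : S.Nonempty)
    (L : E →ₗ[ℝ] F) : ∃ x ∈ S, ∀ y ∈ S, ‖L x‖ ≤ ‖L y‖ := by
  obtain ⟨_, ⟨x, hx, rfl⟩, hdist⟩ := (hS.image L).isClosed.exists_infDist_eq_dist (hne.image L) 0
  refine ⟨x, hx, fun y hy => ?_⟩
  rw [← dist_zero_left, ← hdist, ← dist_zero_left]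
  exact Metric.infDist_le_dist_of_mem (mem_image_of_mem L hy)

end Normed

theorem IsPolyhedron.exists_forall_sum_mul_sq_le {E ι : Type*} [AddCommGroup E] [Module ℝ E]
    [FiniteDimensional ℝ E] {S : Set E} (hS : IsPolyhedron S) (hne : S.Nonempty)
    (s : Finset ι) (w : ι → ℝ) (hw : ∀ i ∈ s, 0 ≤ w i) (f : ι → E →ₗ[ℝ] ℝ) :
    ∃ x ∈ S, ∀ y ∈ S, ∑ i ∈ s, w i * f i x ^ 2 ≤ ∑ i ∈ s, w i * f i y ^ 2 := by
  let L : E →ₗ[ℝ] EuclideanSpace ℝ s :=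
    (WithLp.linearEquiv 2 ℝ (s → ℝ)).symm.toLinearMap ∘ₗ LinearMap.pi fun i => √(w i) • f i
  have hL : ∀ x, ‖L x‖ ^ 2 = ∑ i ∈ s, w i * f i x ^ 2 := fun x => by
    rw [EuclideanSpace.norm_sq_eq, ← Finset.sum_coe_sort s]
    refine Finset.sum_congr rfl fun i _ => ?_
    simp [L, mul_pow, Real.sq_sqrt (hw i i.2)]
  obtain ⟨x, hx, hmin⟩ := hS.exists_forall_norm_le hne L
  exact ⟨x, hx, fun y hy => by
    simpa only [hL] using pow_le_pow_left₀ (norm_nonneg _) (hmin y hy) 2⟩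

theorem forall_exists_lt_iff_exists_neg {E : Type*} [SMul ℝ E] {C : Set E}
    (hC : ∀ v ∈ C, ∀ t : ℝ, 0 ≤ t → t • v ∈ C) {g : E → ℝ}
    (hg : ∀ (t : ℝ) v, g (t • v) = t ^ 2 * g v) :
    (∀ M, ∃ v ∈ C, g v < M) ↔ ∃ v ∈ C, g v < 0 := by
  refine ⟨fun h => h 0, ?_⟩
  rintro ⟨v, hv, hneg⟩ M
  set t := |M| / -g v + 1
  have ht : 1 ≤ t := le_add_of_nonneg_left (div_nonneg (abs_nonneg M) (neg_nonneg.2 hneg.le))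
  have htg : t * g v = -|M| + g v := by
    rw [add_mul, div_mul_eq_mul_div, div_neg, mul_div_assoc, div_self hneg.ne]
    ring
  have hsq : t ^ 2 * g v ≤ t * g v := by
    nlinarith [mul_nonneg (mul_nonneg (by linarith : (0 : ℝ) ≤ t) (sub_nonneg.2 ht))
      (neg_nonneg.2 hneg.le)]
  refine ⟨t • v, hC v hv t (by linarith), ?_⟩
  rw [hg]
  linarith [neg_abs_le M]

theorem exists_neg_iff_exists_neg_of_apply_eq_one_or_neg_one {E : Type*} [AddCommGroup E]
    [Module ℝ E] {C : Set E} (hC : ∀ v ∈ C, ∀ t : ℝ, 0 ≤ t → t • v ∈ C) {g : E → ℝ}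
    (hg : ∀ (t : ℝ) v, g (t • v) = t ^ 2 * g v) (ℓ : E →ₗ[ℝ] ℝ)
    (hker : ∀ v, ℓ v = 0 → 0 ≤ g v) :
    (∃ v ∈ C, g v < 0) ↔ ∃ ε : ℝ, (ε = 1 ∨ ε = -1) ∧ ∃ v ∈ C, ℓ v = ε ∧ g v < 0 := by
  refine ⟨?_, fun ⟨_, _, v, hv, _, hneg⟩ => ⟨v, hv, hneg⟩⟩
  rintro ⟨v, hv, hneg⟩
  have hℓ : ℓ v ≠ 0 := fun h => (hker v h).not_gt hneg
  refine ⟨ℓ v / |ℓ v|, ?_, |ℓ v|⁻¹ • v, hC v hv _ (by positivity), ?_, ?_⟩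
  · rcases hℓ.lt_or_gt with h | h
    · simp [abs_of_neg h, h.ne]
    · simp [abs_of_pos h, h.ne']
  · rw [map_smul, smul_eq_mul, inv_mul_eq_div]
  · rw [hg]
    exact mul_neg_of_pos_of_neg (by positivity) hneg

theorem sum_sum_transpose_mul_diagonal_mul {R ι : Type*} [CommRing R] [Fintype ι] [DecidableEq ι]
    (σ : ι → R) (P : Matrix ι ι R) (v : ι → R) :
    ∑ i, ∑ j, (P.transpose * Matrix.diagonal σ * P) i j * v i * v j
      = ∑ k, σ k * (P.mulVec v k) ^ 2 := by
  have h : ∑ i, ∑ j, (P.transpose * Matrix.diagonal σ * P) i j * v i * v j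
      = v ⬝ᵥ (P.transpose * Matrix.diagonal σ * P).mulVec v := by
    simp only [dotProduct, Matrix.mulVec, Finset.mul_sum]
    exact Finset.sum_congr rfl fun i _ => Finset.sum_congr rfl fun j _ => by ring
  rw [h, Matrix.mul_assoc, ← Matrix.mulVec_mulVec, Matrix.dotProduct_mulVec,
    Matrix.vecMul_transpose, ← Matrix.mulVec_mulVec]
  simp only [dotProduct, Matrix.mulVec_diagonal]
  exact Finset.sum_congr rfl fun k _ => by ring

section AuxiliaryProgram

variable {n : ℕ} {σ : Fin (n + 1) → ℝ}

theorem sum_mul_sq_nonneg_of_apply_last_eq_zero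
    (hσpos : ∀ i : Fin (n + 1), i ≠ Fin.last n → 0 ≤ σ i) {y : Fin (n + 1) → ℝ}
    (hy : y (Fin.last n) = 0) : 0 ≤ ∑ k, σ k * y k ^ 2 := by
  rw [← Finset.sum_erase_add _ _ (Finset.mem_univ (Fin.last n)), hy, zero_pow two_ne_zero,
    mul_zero, add_zero]
  exact Finset.sum_nonneg fun i hi =>
    mul_nonneg (hσpos i (Finset.ne_of_mem_erase hi)) (sq_nonneg (y i))

theorem auxObj_eq_of_sq_apply_last_eq_one (hσneg : σ (Fin.last n) < 0) {y : Fin (n + 1) → ℝ}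
    (hy : y (Fin.last n) ^ 2 = 1) : auxObj σ y = (1/2) * ∑ k, σ k * y k ^ 2 := by
  rw [auxObj, abs_of_neg hσneg, ← Finset.sum_erase_add _ _ (Finset.mem_univ (Fin.last n)), hy]
  ring

theorem exists_neg_iff_exists_neg_auxObj_minimizer
    (hσpos : ∀ i : Fin (n + 1), i ≠ Fin.last n → 0 ≤ σ i) (hσneg : σ (Fin.last n) < 0)
    (P : Matrix (Fin (n + 1)) (Fin (n + 1)) ℝ) {C : Set (Fin (n + 1) → ℝ)}
    (hC : IsPolyhedron C) {ε : ℝ} (hε : ε ^ 2 = 1) :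
    (∃ v ∈ C, P.mulVec v (Fin.last n) = ε ∧ (1/2) * ∑ k, σ k * P.mulVec v k ^ 2 < 0) ↔
      ∃ y vhat : Fin (n + 1) → ℝ,
        (vhat ∈ C ∧ y = P.mulVec vhat ∧ y (Fin.last n) = ε) ∧
        auxObj σ y < 0 ∧
        (∀ y' vhat' : Fin (n + 1) → ℝ,
          (vhat' ∈ C ∧ y' = P.mulVec vhat' ∧ y' (Fin.last n) = ε) →
          auxObj σ y ≤ auxObj σ y') := by
  let coord : Fin (n + 1) → (Fin (n + 1) → ℝ) →ₗ[ℝ] ℝ := fun i => LinearMap.proj i ∘ₗ P.mulVecLin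
  constructor
  · rintro ⟨v, hvC, hv, hneg⟩
    obtain ⟨w, ⟨hwC, hw⟩, hmin⟩ :=
      (hC.inter (isPolyhedron_setOf_eq (coord (Fin.last n)) ε)).exists_forall_sum_mul_sq_le
        ⟨v, hvC, hv⟩ (Finset.univ.erase (Fin.last n)) σ
        (fun i hi => hσpos i (Finset.ne_of_mem_erase hi)) coord
    have hle : ∀ w' ∈ C, P.mulVec w' (Fin.last n) = ε →
        auxObj σ (P.mulVec w) ≤ auxObj σ (P.mulVec w') := fun w' hw'C hw' =>
      sub_le_sub_right (mul_le_mul_of_nonneg_left (hmin w' ⟨hw'C, hw'⟩) (by norm_num)) _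
    refine ⟨P.mulVec w, w, ⟨hwC, rfl, hw⟩, (hle v hvC hv).trans_lt ?_, ?_⟩
    · rwa [auxObj_eq_of_sq_apply_last_eq_one hσneg (by rw [hv, hε])]
    · rintro _ w' ⟨hw'C, rfl, hw'⟩
      exact hle w' hw'C hw'
  · rintro ⟨_, v, ⟨hvC, rfl, hv⟩, hneg, -⟩
    exact ⟨v, hvC, hv, by rwa [← auxObj_eq_of_sq_apply_last_eq_one hσneg (by rw [hv, hε])]⟩

end AuxiliaryProgram

theorem stmt15_general {n mC : ℕ} (σ : Fin (n + 1) → ℝ)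
    (hσpos : ∀ i : Fin (n + 1), i ≠ Fin.last n → 0 ≤ σ i)
    (hσneg : σ (Fin.last n) < 0)
    (P : Matrix (Fin (n + 1)) (Fin (n + 1)) ℝ)
    (Q : Matrix (Fin (n + 1)) (Fin (n + 1)) ℝ)
    (hQ : Q = P.transpose * Matrix.diagonal σ * P)
    (A : Matrix (Fin mC) (Fin (n + 1)) ℝ) (C : Set (Fin (n + 1) → ℝ))
    (hC : C = {v | ∀ i, (∑ j, A i j * v j) ≤ 0}) :
    -- the homogeneous QP is unbounded below on C
    (∀ M : ℝ, ∃ v ∈ C, (1/2) * (∑ i, ∑ j, Q i j * v i * v j) < M) ↔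
    -- one of the two auxiliary convex QPs is feasible with negative attained optimal value
    (∃ ε : ℝ, (ε = 1 ∨ ε = -1) ∧
      ∃ y vhat : Fin (n + 1) → ℝ,
        (vhat ∈ C ∧ y = P.mulVec vhat ∧ y (Fin.last n) = ε) ∧
        auxObj σ y < 0 ∧
        (∀ y' vhat' : Fin (n + 1) → ℝ,
          (vhat' ∈ C ∧ y' = P.mulVec vhat' ∧ y' (Fin.last n) = ε) →
          auxObj σ y ≤ auxObj σ y')) := by
  replace hC : C = {v | ∀ i, (LinearMap.proj i ∘ₗ A.mulVecLin) v ≤ 0} := hC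
  have hcone : ∀ v ∈ C, ∀ t : ℝ, 0 ≤ t → t • v ∈ C := by
    subst hC
    intro v hv t ht i
    simpa only [map_smul, smul_eq_mul] using mul_nonpos_of_nonneg_of_nonpos ht (hv i)
  have hhom : ∀ (t : ℝ) (v : Fin (n + 1) → ℝ), (1/2) * ∑ k, σ k * P.mulVec (t • v) k ^ 2
      = t ^ 2 * ((1/2) * ∑ k, σ k * P.mulVec v k ^ 2) := fun t v => by
    simp only [Matrix.mulVec_smul, Pi.smul_apply, smul_eq_mul, mul_pow, Finset.mul_sum]
    exact Finset.sum_congr rfl fun k _ => by ring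
  simp_rw [hQ, sum_sum_transpose_mul_diagonal_mul]
  rw [forall_exists_lt_iff_exists_neg hcone hhom,
    exists_neg_iff_exists_neg_of_apply_eq_one_or_neg_one hcone hhom
      (LinearMap.proj (Fin.last n) ∘ₗ P.mulVecLin)
      fun v hv => mul_nonneg (by norm_num) (sum_mul_sq_nonneg_of_apply_last_eq_zero hσpos hv)]
  refine exists_congr fun ε => and_congr_right fun hε => ?_
  exact exists_neg_iff_exists_neg_auxObj_minimizer hσpos hσneg P ⟨Fin mC, inferInstance, _, 0, hC⟩
    (by rcases hε with rfl | rfl <;> norm_num)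

/-- Let `Q = Pᵀ D P` be symmetric with exactly one negative eigenvalue
(`D = diag σ`, `σᵢ ≥ 0` for `i ≠ last`, `σ_last < 0`, `P` orthogonal) and let `C` be a
polyhedral cone.  The homogeneous QP `min_{v∈C} ½ vᵀQv` is unbounded below iff one of the
two convex QPs (with constraints `v̂ ∈ C`, `y = P v̂`, `y_last = ±1`) is feasible and
attains a negative optimal objective value. -/
theorem stmt15 {n mC : ℕ} (σ : Fin (n + 1) → ℝ)
    (hσpos : ∀ i : Fin (n + 1), i ≠ Fin.last n → 0 ≤ σ i)
    (hσneg : σ (Fin.last n) < 0)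
    (P : Matrix (Fin (n + 1)) (Fin (n + 1)) ℝ) (hP : P.transpose * P = 1)
    (Q : Matrix (Fin (n + 1)) (Fin (n + 1)) ℝ)
    (hQ : Q = P.transpose * Matrix.diagonal σ * P)
    (A : Matrix (Fin mC) (Fin (n + 1)) ℝ) (C : Set (Fin (n + 1) → ℝ))
    (hC : C = {v | ∀ i, (∑ j, A i j * v j) ≤ 0}) :
    -- the homogeneous QP is unbounded below on C
    (∀ M : ℝ, ∃ v ∈ C, (1/2) * (∑ i, ∑ j, Q i j * v i * v j) < M) ↔
    -- one of the two auxiliary convex QPs is feasible with negative attained optimal value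
    (∃ ε : ℝ, (ε = 1 ∨ ε = -1) ∧
      ∃ y vhat : Fin (n + 1) → ℝ,
        (vhat ∈ C ∧ y = P.mulVec vhat ∧ y (Fin.last n) = ε) ∧
        auxObj σ y < 0 ∧
        (∀ y' vhat' : Fin (n + 1) → ℝ,
          (vhat' ∈ C ∧ y' = P.mulVec vhat' ∧ y' (Fin.last n) = ε) →
          auxObj σ y ≤ auxObj σ y')) :=
  stmt15_general σ hσpos hσneg P Q hQ A C hC
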